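/- arXiv:2302.14420 — 3 statements merged into one kernel-verified Lean document; each statement's English description precedes it below -/
import Mathlib

section
/- Let r ≥ 2, n ≥ 1, and let a ∈ [0,1] satisfy a ≤ 1/(r−1) − 1/(r(r−1)), and set b = 1 − a(r−1). Let p̄ ∈ [0,1]^r be a vector with ‖p̄‖₁ = 1, let p⁺ ∈ [a,b]^r be obtained from p̄ by clamping each entry to [a,b], and define p' by p'_j = (p⁺_j − a)·(1 − ar)/‖p⁺ − (a,…,a)‖₁ + a for all j ∈ [0..r−1]. Then the entries of p' sum to 1, every entry of p' is at least a, and every entry of p' is at most b. -/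
open Finset

/-- The restriction rule of the multi-valued EDA framework produces a
valid frequency vector: the entries of `p'` sum to `1`, and every entry lies in `[a, b]`. -/
theorem restriction_is_frequency_vector
    (r n : ℕ) (hr : 2 ≤ r) (hn : 1 ≤ n)
    (a : ℝ) (ha0 : 0 ≤ a) (ha1 : a ≤ 1)
    (ha : a ≤ 1 / ((r : ℝ) - 1) - 1 / ((r : ℝ) * ((r : ℝ) - 1)))
    (b : ℝ) (hb : b = 1 - a * ((r : ℝ) - 1))
    (pbar : Fin r → ℝ) (hmem : ∀ j, 0 ≤ pbar j ∧ pbar j ≤ 1)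
    (hsum : ∑ j, pbar j = 1)
    (pplus : Fin r → ℝ) (hplus : ∀ j, pplus j = max a (min b (pbar j)))
    (p' : Fin r → ℝ)
    (hp' : ∀ j, p' j = (pplus j - a) * (1 - a * (r : ℝ)) / (∑ k, (pplus k - a)) + a) :
    (∑ j, p' j = 1) ∧ (∀ j, a ≤ p' j) ∧ (∀ j, p' j ≤ b) := by
  have hrR : (2 : ℝ) ≤ (r : ℝ) := by exact_mod_cast hr
  have hr0 : (0 : ℝ) < (r : ℝ) := by linarith
  have hr1 : (0 : ℝ) < (r : ℝ) - 1 := by linarith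
  -- a ≤ 1/r
  have hineq : 1 / ((r : ℝ) - 1) - 1 / ((r : ℝ) * ((r : ℝ) - 1)) = 1 / (r : ℝ) := by
    field_simp
  have har : a * (r : ℝ) ≤ 1 := by
    rw [hineq] at ha
    have := (div_le_div_iff₀ hr0 hr0).mp (le_refl (1 / (r:ℝ)))
    calc a * (r : ℝ) ≤ (1 / (r : ℝ)) * (r : ℝ) := by
          exact mul_le_mul_of_nonneg_right ha (le_of_lt hr0)
      _ = 1 := by field_simp
  have hba : b - a = 1 - a * (r : ℝ) := by rw [hb]; ring
  have hab : a ≤ b := by linarith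
  -- pplus bounds
  have hplus_ge : ∀ j, a ≤ pplus j := fun j => by rw [hplus j]; exact le_max_left _ _
  have hterm_nonneg : ∀ j : Fin r, 0 ≤ pplus j - a := fun j => by
    have := hplus_ge j; linarith
  rcases eq_or_lt_of_le har with heq | hlt
  · -- degenerate case: a * r = 1, so b = a and all entries are a
    have hbeqa : b = a := by
      have : (r : ℝ) - 1 = (r : ℝ) - 1 := rfl
      rw [hb]; nlinarith [heq]
    have hpa : ∀ j, pplus j = a := fun j => by
      rw [hplus j, hbeqa]
      exact max_eq_left (min_le_left _ _)
    have hp'a : ∀ j, p' j = a := fun j => by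
      rw [hp' j, hpa j]; simp
    constructor
    · rw [Finset.sum_congr rfl (fun j _ => hp'a j)]
      simp [Finset.card_univ]
      nlinarith [heq]
    · exact ⟨fun j => (hp'a j).ge, fun j => by rw [hp'a j, hbeqa]⟩
  · -- main case: a * r < 1
    have hS : 0 < ∑ k, (pplus k - a) := by
      -- there exists j with pbar j > a
      have hj : ∃ j : Fin r, a < pbar j := by
        by_contra h
        push_neg at h
        have : (1 : ℝ) ≤ (r : ℝ) * a := by
          calc (1 : ℝ) = ∑ j, pbar j := hsum.symm
            _ ≤ ∑ _j : Fin r, a := Finset.sum_le_sum (fun j _ => h j)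
            _ = (r : ℝ) * a := by simp [Finset.card_univ, mul_comm]
        nlinarith
      obtain ⟨j0, hj0⟩ := hj
      have hb_gt : a < b := by linarith
      have hpos : 0 < pplus j0 - a := by
        rw [hplus j0]
        have : a < min b (pbar j0) := lt_min hb_gt hj0
        have := lt_max_of_lt_right (b := a) this
        linarith [le_max_right a (min b (pbar j0)), lt_min hb_gt hj0]
      exact Finset.sum_pos' (fun j _ => hterm_nonneg j) ⟨j0, Finset.mem_univ j0, hpos⟩
    have hSne : (∑ k, (pplus k - a)) ≠ 0 := ne_of_gt hS
    refine ⟨?_, ?_, ?_⟩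
    · rw [Finset.sum_congr rfl (fun j _ => hp' j), Finset.sum_add_distrib]
      simp only [mul_div_assoc]
      rw [← Finset.sum_mul, mul_comm, div_mul_cancel₀ _ hSne]
      have hsa : ∑ _x : Fin r, a = (r : ℝ) * a := by
        simp [Finset.card_univ, mul_comm]
      rw [hsa]; ring
    · intro j
      rw [hp' j]
      have : 0 ≤ (pplus j - a) * (1 - a * (r : ℝ)) / (∑ k, (pplus k - a)) :=
        div_nonneg (mul_nonneg (hterm_nonneg j) (by linarith)) hS.le
      linarith
    · intro j
      rw [hp' j]
      have hle : pplus j - a ≤ ∑ k, (pplus k - a) :=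
        Finset.single_le_sum (fun k _ => hterm_nonneg k) (Finset.mem_univ j)
      have : (pplus j - a) * (1 - a * (r : ℝ)) / (∑ k, (pplus k - a)) ≤ 1 - a * (r : ℝ) := by
        rw [div_le_iff₀ hS]
        nlinarith
      linarith
end

section
/- Let f : [0..r−1]^n → ℝ be an r-valued fitness function with a neutral position i ∈ [n]. Consider the r-UMDA without margins (lower border 0 and upper border 1, so no restriction takes place) with parameters λ ≥ μ ≥ 1 optimizing f. Then for each value j ∈ [0..r−1], the sequence of frequencies (p^(t)_{i,j})_{t∈ℕ} is a martingale with respect to its natural filtration. -/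
open MeasureTheory Finset

namespace MVEda

/-- The relative frequency of value `j` at position `i` among the `mu` selected
individuals (`S` is the Boolean indicator of selection within the population `P`). -/
noncomputable def empirical (n r lam mu : ℕ) (P : Fin lam → Fin n → Fin r)
    (S : Fin lam → Bool) (i : Fin n) (j : Fin r) : ℝ :=
  ((mu : ℝ))⁻¹ * ∑ k : Fin lam, (if S k = true ∧ P k i = j then (1 : ℝ) else 0)

/-- The frequency matrix of the `r`-UMDA **without margins** (lower border `0`, upper
border `1`, so that no restriction takes place) at iteration `t`, as a deterministic
function of the history of previous populations and selections: it is initialized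
uniformly (all entries `1/r`), and each update sets the entries to the relative
frequencies among the selected individuals. -/
noncomputable def freqHistNM (n r lam mu : ℕ) :
    (t : ℕ) → (Fin t → (Fin lam → Fin n → Fin r) × (Fin lam → Bool)) →
      Fin n → Fin r → ℝ
  | 0, _, _, _ => ((r : ℝ))⁻¹
  | t + 1, h, i, j => empirical n r lam mu (h (Fin.last t)).1 (h (Fin.last t)).2 i j

/-- A Boolean vector `S` is a valid selection for the population `P` if it selects
exactly `mu` individuals and every selected individual has fitness at least that of
every unselected individual. -/
def ValidSelection (n r lam mu : ℕ) (f : (Fin n → Fin r) → ℝ)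
    (P : Fin lam → Fin n → Fin r) (S : Fin lam → Bool) : Prop :=
  Nat.card {k : Fin lam // S k = true} = mu ∧
    ∀ k k' : Fin lam, S k = true → S k' = false → f (P k') ≤ f (P k)

/-- The event that the history of the first `t` iterations equals `h`. -/
def HistEq (n r lam : ℕ) {Ω : Type*} (pop : ℕ → Ω → Fin lam → Fin n → Fin r)
    (sel : ℕ → Ω → Fin lam → Bool) (t : ℕ)
    (h : Fin t → (Fin lam → Fin n → Fin r) × (Fin lam → Bool)) : Set Ω :=
  {ω | ∀ s : Fin t, (pop (s : ℕ) ω, sel (s : ℕ) ω) = h s}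

/-- The `r`-UMDA **without margins** with population size `lam` and selection size `mu`
optimizing `f`; see the fields for the law of sampling and selection. -/
structure RUMDAnm (Ω : Type*) [MeasurableSpace Ω] (Pr : Measure Ω)
    (n r lam mu : ℕ) (f : (Fin n → Fin r) → ℝ) where
  pop : ℕ → Ω → Fin lam → Fin n → Fin r
  sel : ℕ → Ω → Fin lam → Bool
  measurable_pop : ∀ t, Measurable (pop t)
  measurable_sel : ∀ t, Measurable (sel t)
  sampling : ∀ (t : ℕ) (h : Fin t → (Fin lam → Fin n → Fin r) × (Fin lam → Bool))
      (P : Fin lam → Fin n → Fin r),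
      Pr ({ω | pop t ω = P} ∩ HistEq n r lam pop sel t h)
        = ENNReal.ofReal
            (∏ k : Fin lam, ∏ i : Fin n, freqHistNM n r lam mu t h i (P k i))
          * Pr (HistEq n r lam pop sel t h)
  selection : ∀ (t : ℕ) (h : Fin t → (Fin lam → Fin n → Fin r) × (Fin lam → Bool))
      (P : Fin lam → Fin n → Fin r) (S : Fin lam → Bool),
      Pr ({ω | sel t ω = S} ∩ {ω | pop t ω = P} ∩ HistEq n r lam pop sel t h)
        = (@ite _ (ValidSelection n r lam mu f P S) (Classical.propDecidable _)
              (((Nat.card {S' : Fin lam → Bool // ValidSelection n r lam mu f P S'} :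
                ENNReal))⁻¹) 0)
          * Pr ({ω | pop t ω = P} ∩ HistEq n r lam pop sel t h)

/-- The (random) frequency matrix of the margin-free `r`-UMDA at iteration `t`. -/
noncomputable def RUMDAnm.freq {Ω : Type*} [MeasurableSpace Ω] {Pr : Measure Ω}
    {n r lam mu : ℕ} {f : (Fin n → Fin r) → ℝ} (A : RUMDAnm Ω Pr n r lam mu f)
    (t : ℕ) (ω : Ω) : Fin n → Fin r → ℝ :=
  freqHistNM n r lam mu t (fun s => (A.pop (s : ℕ) ω, A.sel (s : ℕ) ω))

/-- Position `i` is neutral for `f`: the value at position `i` never influences `f`. -/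
def Neutral (n r : ℕ) (f : (Fin n → Fin r) → ℝ) (i : Fin n) : Prop :=
  ∀ x x' : Fin n → Fin r, (∀ i' : Fin n, i' ≠ i → x i' = x' i') → f x = f x'

end MVEda

open MVEda

/-!
Conditioned on the history up to iteration `t`, the population of iteration `t` consists of
independent samples from `p⁽ᵗ⁾`, and the selection sees the population only through the fitness
values, which ignore position `i`. Hence column `i` of the population is independent of the
selection: each selected individual has value `j` at position `i` with probability `p⁽ᵗ⁾ᵢⱼ`, so the
expected relative frequency among the `mu` selected ones is again `p⁽ᵗ⁾ᵢⱼ`. The history takes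
finitely many values and determines all frequencies up to time `t`, so this identity on each of
its fibers is the martingale property for the natural filtration.
-/

open Function

section ProductWeights

variable {κ ι β : Type*}

theorem Equiv.funSplitAt_symm_eq_update [DecidableEq ι] (a : ι) (c c' : β) (y : {j // j ≠ a} → β) :
    (Equiv.funSplitAt a β).symm (c, y) = update ((Equiv.funSplitAt a β).symm (c', y)) a c := by
  funext j
  by_cases hj : j = a
  · subst hj; simp [Equiv.funSplitAt_symm_apply]
  · simp [Equiv.funSplitAt_symm_apply, hj]

theorem sum_prod_mul_apply_mul_of_update_eq [Fintype ι] [DecidableEq ι] [Fintype β]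
    (p : ι → β → ℝ) {a : ι} (hpa : ∑ b, p a b = 1) (φ : β → ℝ) {R : (ι → β) → ℝ} (hR : ∀ x b, R (update x a b) = R x) :
    ∑ x, (∏ a', p a' (x a')) * φ (x a) * R x
      = (∑ b, p a b * φ b) * ∑ x, (∏ a', p a' (x a')) * R x := by
  let T (c : β) : ℝ := ∑ y : {j // j ≠ a} → β,
    (∏ a' : {j // j ≠ a}, p a' (y a')) * R ((Equiv.funSplitAt a β).symm (c, y))
  have hT : ∀ c c', T c = T c' := fun c c' => by
    simp only [T, Equiv.funSplitAt_symm_eq_update a c c', hR]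
  have hsplit : ∀ ψ : β → ℝ,
      ∑ x, (∏ a', p a' (x a')) * ψ (x a) * R x = ∑ c, p a c * ψ c * T c := by
    intro ψ
    rw [← (Equiv.funSplitAt a β).symm.sum_comp, Fintype.sum_prod_type]
    refine Finset.sum_congr rfl fun c _ => ?_
    rw [Finset.mul_sum]
    refine Finset.sum_congr rfl fun y _ => ?_
    rw [Fintype.prod_eq_mul_prod_subtype_ne _ a, Equiv.funSplitAt_symm_apply, dif_pos rfl,
      Finset.prod_congr rfl fun a' _ => by rw [Equiv.funSplitAt_symm_apply, dif_neg a'.2]]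
    ring
  have hsplit_one := hsplit fun _ => 1
  simp only [mul_one] at hsplit_one
  rw [hsplit, hsplit_one, Finset.sum_mul]
  refine Finset.sum_congr rfl fun b _ => ?_
  have hT_avg : ∑ c, p a c * T c = T b := by simp_rw [hT _ b, ← Finset.sum_mul, hpa, one_mul]
  rw [hT_avg]

theorem sum_prod_eq_one [Fintype ι] [DecidableEq ι] [Fintype β] {p : ι → β → ℝ}
    (hp : ∀ a, ∑ b, p a b = 1) : ∑ x : ι → β, ∏ a, p a (x a) = 1 := by
  rw [← Fintype.prod_sum]
  simp [hp]

theorem sum_prod_mul_ite_apply_eq [Fintype κ] [DecidableEq κ] [Fintype β] [DecidableEq β]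
    {g : β → ℝ} (hg : ∑ b, g b = 1) (k : κ) (j : β) :
    ∑ v : κ → β, (∏ k', g (v k')) * (if v k = j then 1 else 0) = g j := by
  have h := sum_prod_mul_apply_mul_of_update_eq (fun _ => g) hg (fun b => if b = j then 1 else 0)
    (R := fun _ => 1) (a := k) fun _ _ => rfl
  simpa [sum_prod_eq_one fun _ => hg] using h

def popProb [Fintype κ] [Fintype ι] (p : ι → β → ℝ) (P : κ → ι → β) : ℝ := ∏ k, ∏ a, p a (P k a)

theorem popProb_nonneg [Fintype κ] [Fintype ι] {p : ι → β → ℝ} (hp : ∀ a b, 0 ≤ p a b)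
    (P : κ → ι → β) : 0 ≤ popProb p P :=
  prod_nonneg fun _ _ => prod_nonneg fun _ _ => hp _ _

theorem sum_popProb [Fintype κ] [DecidableEq κ] [Fintype ι] [DecidableEq ι] [Fintype β]
    {p : ι → β → ℝ} (hp : ∀ a, ∑ b, p a b = 1) : ∑ P : κ → ι → β, popProb p P = 1 :=
  sum_prod_eq_one fun _ => sum_prod_eq_one hp

theorem sum_popProb_mul_ite_mul [Fintype κ] [DecidableEq κ] [Fintype ι] [DecidableEq ι]
    [Fintype β] [DecidableEq β] {p : ι → β → ℝ} (hp : ∀ a, ∑ b, p a b = 1) {i : ι}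
    {R : (κ → ι → β) → ℝ} (hR : ∀ P P', (∀ k a, a ≠ i → P k a = P' k a) → R P = R P')
    (k : κ) (j : β) :
    ∑ P, popProb p P * (if P k i = j then 1 else 0) * R P = p i j * ∑ P, popProb p P * R P := by
  -- after transposing, column `i` is a single coordinate of a product weight
  let e := Equiv.piComm fun (_ : ι) (_ : κ) => β
  have hpop : ∀ Q, popProb p (e Q) = ∏ a, ∏ k', p a (Q a k') := fun Q => Finset.prod_comm
  have h := sum_prod_mul_apply_mul_of_update_eq (fun a (col : κ → β) => ∏ k', p a (col k'))
    (a := i) (sum_prod_eq_one fun _ => hp i) (fun col => if col k = j then 1 else 0)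
    (R := fun Q => R (e Q)) fun Q col => hR _ _ fun k' a ha => by
      show update Q i col a k' = Q a k'
      rw [update_of_ne ha]
  rw [sum_prod_mul_ite_apply_eq (hp i)] at h
  rw [← e.sum_comp, ← e.sum_comp]
  simp only [hpop]
  exact h

end ProductWeights

namespace MVEda

section ExpectedFrequency

variable {n r lam mu : ℕ}

theorem sum_ite_selected_eq {S : Fin lam → Bool} (hS : Nat.card {k // S k = true} = mu) :
    ∑ k, (if S k = true then (1 : ℝ) else 0) = mu := by
  rw [Finset.sum_boole, ← hS, Nat.card_eq_fintype_card, Fintype.card_subtype]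

theorem sum_empirical (hmu : mu ≠ 0) (P : Fin lam → Fin n → Fin r) {S : Fin lam → Bool}
    (hS : Nat.card {k // S k = true} = mu) (i : Fin n) :
    ∑ j, empirical n r lam mu P S i j = 1 := by
  simp_rw [empirical, ← Finset.mul_sum, ite_and]
  rw [Finset.sum_comm]
  simp_rw [Finset.sum_ite_irrel, Finset.sum_ite_eq, Finset.mem_univ, if_true,
    Finset.sum_const_zero, sum_ite_selected_eq hS]
  exact inv_mul_cancel₀ (Nat.cast_ne_zero.2 hmu)

theorem sum_popProb_mul_mul_empirical {i : Fin n} (hmu : mu ≠ 0) {p : Fin n → Fin r → ℝ}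
    (hp : ∀ a, ∑ b, p a b = 1)
    {sel : (Fin lam → Fin n → Fin r) → (Fin lam → Bool) → ℝ}
    (hsel_neutral : ∀ S P P', (∀ k a, a ≠ i → P k a = P' k a) → sel P S = sel P' S)
    (hsel_card : ∀ P S, sel P S ≠ 0 → Nat.card {k // S k = true} = mu)
    (hsel_sum : ∀ P, ∑ S, sel P S = 1) (j : Fin r) :
    ∑ P, ∑ S, popProb p P * sel P S * empirical n r lam mu P S i j = p i j := by
  have hS : ∀ S, ∑ P, popProb p P * sel P S * empirical n r lam mu P S i j
      = p i j * ∑ P, popProb p P * sel P S := by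
    intro S
    by_cases hcard : Nat.card {k // S k = true} = mu
    · have hk : ∀ k, ∑ P, popProb p P * sel P S * (if S k = true ∧ P k i = j then 1 else 0)
          = (if S k = true then 1 else 0) * (p i j * ∑ P, popProb p P * sel P S) := by
        intro k
        by_cases hSk : S k = true
        · simp only [hSk, true_and, if_true, one_mul]
          rw [← sum_popProb_mul_ite_mul hp (hsel_neutral S) k j]
          exact Finset.sum_congr rfl fun P _ => by ring
        · simp [hSk]
      calc ∑ P, popProb p P * sel P S * empirical n r lam mu P S i j
          = (mu : ℝ)⁻¹ * ∑ k, ∑ P, popProb p P * sel P S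
              * (if S k = true ∧ P k i = j then 1 else 0) := by
            simp_rw [empirical, Finset.mul_sum]
            rw [Finset.sum_comm]
            exact Finset.sum_congr rfl fun k _ => Finset.sum_congr rfl fun P _ => by ring
        _ = p i j * ∑ P, popProb p P * sel P S := by
            simp_rw [hk, ← Finset.sum_mul, sum_ite_selected_eq hcard]
            field_simp
    · have hzero : ∀ P, sel P S = 0 := fun P => by_contra fun h => hcard (hsel_card P S h)
      simp [hzero]
  rw [Finset.sum_comm, Finset.sum_congr rfl fun S _ => hS S, ← Finset.mul_sum, Finset.sum_comm]
  simp_rw [← Finset.mul_sum, hsel_sum, mul_one, sum_popProb hp, mul_one]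

end ExpectedFrequency

section ValidSelection

variable {n r lam mu : ℕ}

theorem exists_validSelection (hml : mu ≤ lam) (f : (Fin n → Fin r) → ℝ)
    (P : Fin lam → Fin n → Fin r) : ∃ S, ValidSelection n r lam mu f P S := by
  classical
  obtain ⟨T, hT, hT_max⟩ := Finset.exists_max_image (univ.powersetCard mu)
    (fun T => ∑ k ∈ T, f (P k)) (Finset.powersetCard_nonempty.2 (by simpa using hml))
  rw [Finset.mem_powersetCard_univ] at hT
  refine ⟨fun k => decide (k ∈ T), by simpa [Nat.card_eq_fintype_card, Fintype.card_subtype],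
    fun k k' hk hk' => ?_⟩
  simp only [decide_eq_true_eq] at hk
  simp only [decide_eq_false_iff_not] at hk'
  by_contra! hlt
  -- exchanging `k` for `k'` would give a better set of `mu` individuals
  have hk'T : k' ∉ T.erase k := fun h => hk' (Finset.mem_of_mem_erase h)
  have hswap := hT_max (insert k' (T.erase k)) <| Finset.mem_powersetCard_univ.2 <| by
    rw [Finset.card_insert_of_notMem hk'T, Finset.card_erase_of_mem hk, hT,
      Nat.sub_add_cancel (hT ▸ Finset.card_pos.2 ⟨k, hk⟩)]
  rw [Finset.sum_insert hk'T, ← Finset.add_sum_erase T _ hk] at hswap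
  linarith

theorem validSelection_congr {f : (Fin n → Fin r) → ℝ} {P P' : Fin lam → Fin n → Fin r}
    (h : ∀ k, f (P k) = f (P' k)) (S : Fin lam → Bool) :
    ValidSelection n r lam mu f P S ↔ ValidSelection n r lam mu f P' S := by
  simp only [ValidSelection, h]

open Classical in
noncomputable def selProb (mu : ℕ) (f : (Fin n → Fin r) → ℝ) (P : Fin lam → Fin n → Fin r)
    (S : Fin lam → Bool) : ℝ :=
  if ValidSelection n r lam mu f P S then
    ((Nat.card {S' // ValidSelection n r lam mu f P S'} : ℕ) : ℝ)⁻¹ else 0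

theorem selProb_congr {f : (Fin n → Fin r) → ℝ} {P P' : Fin lam → Fin n → Fin r}
    (h : ∀ k, f (P k) = f (P' k)) (S : Fin lam → Bool) :
    selProb mu f P S = selProb mu f P' S := by
  have hvalid : ValidSelection n r lam mu f P = ValidSelection n r lam mu f P' :=
    funext fun S => propext (validSelection_congr h S)
  unfold selProb
  rw [hvalid]

theorem natCard_eq_of_selProb_ne_zero {f : (Fin n → Fin r) → ℝ} {P : Fin lam → Fin n → Fin r}
    {S : Fin lam → Bool} (h : selProb mu f P S ≠ 0) : Nat.card {k // S k = true} = mu := by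
  by_contra hS
  exact h (if_neg fun hv => hS hv.1)

theorem sum_selProb (hml : mu ≤ lam) (f : (Fin n → Fin r) → ℝ) (P : Fin lam → Fin n → Fin r) :
    ∑ S, selProb mu f P S = 1 := by
  classical
  obtain ⟨S, hS⟩ := exists_validSelection hml f P
  simp only [selProb, Finset.sum_ite, Finset.sum_const, nsmul_eq_mul, mul_zero, add_zero,
    Nat.card_eq_fintype_card, Fintype.card_subtype]
  exact mul_inv_cancel₀ <| Nat.cast_ne_zero.2 <| Finset.card_ne_zero.2
    ⟨S, Finset.mem_filter.2 ⟨Finset.mem_univ _, hS⟩⟩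

end ValidSelection

end MVEda

section FiniteValued

variable {Ω : Type*} [MeasurableSpace Ω] {μ : Measure Ω}

theorem setIntegral_comp_eq_sum [IsFiniteMeasure μ] {β : Type*} [Fintype β] [MeasurableSpace β]
    [MeasurableSingletonClass β] {Y : Ω → β} (hY : Measurable Y) (g : β → ℝ) (E : Set Ω) :
    ∫ ω in E, g (Y ω) ∂μ = ∑ b, g b * μ.real (Y ⁻¹' {b} ∩ E) := by
  rw [← integral_map hY.aemeasurable (measurable_of_finite g).aestronglyMeasurable,
    integral_fintype Integrable.of_finite]
  refine Finset.sum_congr rfl fun b _ => ?_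
  rw [smul_eq_mul, mul_comm, map_measureReal_apply hY (measurableSet_singleton b),
    measureReal_restrict_apply (hY (measurableSet_singleton b))]

theorem setIntegral_preimage_eq_sum {β : Type*} [MeasurableSpace β] [MeasurableSingletonClass β]
    {Y : Ω → β} (hY : Measurable Y) {Z : Ω → ℝ} (hZ : Integrable Z μ) (B : Finset β) :
    ∫ ω in Y ⁻¹' B, Z ω ∂μ = ∑ b ∈ B, ∫ ω in Y ⁻¹' {b}, Z ω ∂μ := by
  rw [← Set.biUnion_preimage_singleton]
  exact integral_biUnion_finset B (fun b _ => hY (measurableSet_singleton b))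
    ((pairwise_disjoint_fiber Y).set_pairwise _) fun b _ => hZ.integrableOn

theorem martingale_natural_of_setIntegral_fiber_eq [IsFiniteMeasure μ] {β : ℕ → Type*}
    [∀ t, Fintype (β t)] [∀ t, MeasurableSpace (β t)] [∀ t, MeasurableSingletonClass (β t)]
    {Y : ∀ t, Ω → β t} (hY : ∀ t, Measurable (Y t)) {X : ℕ → Ω → ℝ}
    (hX : ∀ t, StronglyMeasurable (X t)) (hXY : ∀ s t, s ≤ t → ∃ g : β t → ℝ, X s = g ∘ Y t)
    (hfib : ∀ t b, ∫ ω in Y t ⁻¹' {b}, X t ω ∂μ = ∫ ω in Y t ⁻¹' {b}, X (t + 1) ω ∂μ) :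
    Martingale X (Filtration.natural X hX) μ := by
  have hint : ∀ t, Integrable (X t) μ := fun t => by
    obtain ⟨g, hg⟩ := hXY t t le_rfl
    rw [hg]
    exact Integrable.of_finite.comp_measurable (hY t)
  have hnat : ∀ t, Filtration.natural X hX t ≤ MeasurableSpace.comap (Y t) inferInstance :=
    fun t => iSup₂_le fun s hst => by
      obtain ⟨g, hg⟩ := hXY s t hst
      rw [hg]
      exact ((measurable_of_finite g).comp (comap_measurable (Y t))).comap_le
  refine martingale_of_setIntegral_eq_succ (Filtration.stronglyAdapted_natural hX) hint
    fun t s hs => ?_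
  obtain ⟨B, -, rfl⟩ := hnat t s hs
  lift B to Finset (β t) using B.toFinite
  simp_rw [setIntegral_preimage_eq_sum (hY t) (hint _), hfib]

end FiniteValued

namespace MVEda

theorem freqHistNM_nonneg {n r lam mu : ℕ} (t : ℕ)
    (h : Fin t → (Fin lam → Fin n → Fin r) × (Fin lam → Bool)) (i : Fin n) (j : Fin r) :
    0 ≤ freqHistNM n r lam mu t h i j := by
  cases t with
  | zero => exact inv_nonneg.2 r.cast_nonneg
  | succ t =>
    exact mul_nonneg (inv_nonneg.2 mu.cast_nonneg) (Finset.sum_nonneg fun _ _ => by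
      split_ifs <;> norm_num)

namespace RUMDAnm

variable {Ω : Type*} [MeasurableSpace Ω] {Pr : Measure Ω} {n r lam mu : ℕ}
  {f : (Fin n → Fin r) → ℝ} (A : RUMDAnm Ω Pr n r lam mu f)

def history (t : ℕ) (ω : Ω) : Fin t → (Fin lam → Fin n → Fin r) × (Fin lam → Bool) :=
  fun s => (A.pop s ω, A.sel s ω)

theorem measurable_history (t : ℕ) : Measurable (A.history t) :=
  measurable_pi_lambda _ fun s => (A.measurable_pop s).prodMk (A.measurable_sel s)

theorem histEq_eq_preimage (t : ℕ) (h : Fin t → (Fin lam → Fin n → Fin r) × (Fin lam → Bool)) :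
    HistEq n r lam A.pop A.sel t h = A.history t ⁻¹' {h} := by
  ext ω
  exact funext_iff.symm

theorem measurableSet_histEq (t : ℕ)
    (h : Fin t → (Fin lam → Fin n → Fin r) × (Fin lam → Bool)) :
    MeasurableSet (HistEq n r lam A.pop A.sel t h) := by
  rw [A.histEq_eq_preimage]
  exact A.measurable_history t (measurableSet_singleton h)

theorem measureReal_sel_pop_histEq (t : ℕ)
    (h : Fin t → (Fin lam → Fin n → Fin r) × (Fin lam → Bool)) (P : Fin lam → Fin n → Fin r)
    (S : Fin lam → Bool) :
    Pr.real ({ω | A.sel t ω = S} ∩ {ω | A.pop t ω = P} ∩ HistEq n r lam A.pop A.sel t h)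
      = selProb mu f P S * popProb (freqHistNM n r lam mu t h) P
          * Pr.real (HistEq n r lam A.pop A.sel t h) := by
  rw [measureReal_def, A.selection, A.sampling, ENNReal.toReal_mul, ENNReal.toReal_mul,
    ← mul_assoc, measureReal_def]
  congr 2
  · unfold selProb
    split_ifs <;> simp
  · exact ENNReal.toReal_ofReal (popProb_nonneg (freqHistNM_nonneg t h) P)

theorem sum_freqHistNM_eq_one (hr : r ≠ 0) (hmu : mu ≠ 0) (t : ℕ)
    (h : Fin t → (Fin lam → Fin n → Fin r) × (Fin lam → Bool))
    (hpos : Pr (HistEq n r lam A.pop A.sel t h) ≠ 0) (a : Fin n) :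
    ∑ b, freqHistNM n r lam mu t h a b = 1 := by
  cases t with
  | zero => simp [freqHistNM, hr]
  | succ t =>
    have hsub : HistEq n r lam A.pop A.sel (t + 1) h ⊆ {ω | A.sel t ω = (h (Fin.last t)).2}
        ∩ {ω | A.pop t ω = (h (Fin.last t)).1}
        ∩ HistEq n r lam A.pop A.sel t (fun s => h s.castSucc) := fun ω hω =>
      ⟨⟨congrArg Prod.snd (hω (Fin.last t)), congrArg Prod.fst (hω (Fin.last t))⟩,
        fun s => hω s.castSucc⟩
    have hvalid : ValidSelection n r lam mu f (h (Fin.last t)).1 (h (Fin.last t)).2 := by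
      by_contra hinvalid
      refine hpos (measure_mono_null hsub ?_)
      rw [A.selection, if_neg hinvalid, zero_mul]
    exact sum_empirical hmu _ hvalid.1 a

theorem setIntegral_freq_succ_histEq [IsFiniteMeasure Pr] {i : Fin n} (hneutral : Neutral n r f i)
    (hr : r ≠ 0) (hmu : mu ≠ 0) (hml : mu ≤ lam) (t : ℕ)
    (h : Fin t → (Fin lam → Fin n → Fin r) × (Fin lam → Bool)) (j : Fin r) :
    ∫ ω in HistEq n r lam A.pop A.sel t h, A.freq (t + 1) ω i j ∂Pr
      = freqHistNM n r lam mu t h i j * Pr.real (HistEq n r lam A.pop A.sel t h) := by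
  set H := HistEq n r lam A.pop A.sel t h
  have hY : Measurable fun ω => (A.pop t ω, A.sel t ω) :=
    (A.measurable_pop t).prodMk (A.measurable_sel t)
  have hfiber : ∀ P S, (fun ω => (A.pop t ω, A.sel t ω)) ⁻¹' {(P, S)} ∩ H
      = {ω | A.sel t ω = S} ∩ {ω | A.pop t ω = P} ∩ H := fun P S => by
    ext ω
    simp [and_comm]
  calc ∫ ω in H, A.freq (t + 1) ω i j ∂Pr
      = ∑ PS : (Fin lam → Fin n → Fin r) × (Fin lam → Bool), empirical n r lam mu PS.1 PS.2 i j
          * Pr.real ((fun ω => (A.pop t ω, A.sel t ω)) ⁻¹' {PS} ∩ H) :=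
        setIntegral_comp_eq_sum hY (fun PS => empirical n r lam mu PS.1 PS.2 i j) H
    _ = (∑ P, ∑ S, popProb (freqHistNM n r lam mu t h) P * selProb mu f P S
          * empirical n r lam mu P S i j) * Pr.real H := by
        simp_rw [Fintype.sum_prod_type, Finset.sum_mul, hfiber, H, A.measureReal_sel_pop_histEq]
        exact Finset.sum_congr rfl fun P _ => Finset.sum_congr rfl fun S _ => by ring
    _ = freqHistNM n r lam mu t h i j * Pr.real H := by
        rcases eq_or_ne (Pr H) 0 with hH | hH
        · simp [measureReal_def, hH]
        · rw [sum_popProb_mul_mul_empirical hmu (A.sum_freqHistNM_eq_one hr hmu t h hH)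
            (fun S P P' hPP' => selProb_congr (fun k => hneutral _ _ (hPP' k)) S)
            (fun _ _ => natCard_eq_of_selProb_ne_zero) (sum_selProb hml f)]

theorem setIntegral_freq_histEq {i : Fin n} {j : Fin r} (t : ℕ)
    (h : Fin t → (Fin lam → Fin n → Fin r) × (Fin lam → Bool)) :
    ∫ ω in HistEq n r lam A.pop A.sel t h, A.freq t ω i j ∂Pr
      = freqHistNM n r lam mu t h i j * Pr.real (HistEq n r lam A.pop A.sel t h) := by
  have hconst : Set.EqOn (fun ω => A.freq t ω i j) (fun _ => freqHistNM n r lam mu t h i j)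
      (HistEq n r lam A.pop A.sel t h) := fun ω hω =>
    congrArg (fun h' => freqHistNM n r lam mu t h' i j) (funext hω)
  rw [setIntegral_congr_fun (A.measurableSet_histEq t h) hconst, setIntegral_const, smul_eq_mul,
    mul_comm]

end RUMDAnm

end MVEda

theorem neutral_frequency_is_martingale_general
    {Ω : Type*} [MeasurableSpace Ω] (Pr : Measure Ω) [IsProbabilityMeasure Pr]
    (n r lam mu : ℕ) (hr : 2 ≤ r) (hmu : 1 ≤ mu) (hml : mu ≤ lam)
    (f : (Fin n → Fin r) → ℝ) (i : Fin n) (hneutral : Neutral n r f i)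
    (A : RUMDAnm Ω Pr n r lam mu f) (j : Fin r)
    (hmeas : ∀ t : ℕ, StronglyMeasurable (fun ω => A.freq t ω i j)) :
    Martingale (fun t ω => A.freq t ω i j)
      (Filtration.natural (fun t ω => A.freq t ω i j) hmeas) Pr := by
  refine martingale_natural_of_setIntegral_fiber_eq A.measurable_history hmeas
    (fun s t hst => ⟨fun h => freqHistNM n r lam mu s (fun u => h (Fin.castLE hst u)) i j, rfl⟩)
    fun t h => ?_
  rw [← A.histEq_eq_preimage, A.setIntegral_freq_histEq,
    A.setIntegral_freq_succ_histEq hneutral (by omega) (by omega) hml]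

/-- Lemma `neutralFrequencyIsMartingale`: for the `r`-UMDA without
margins optimizing an `r`-valued fitness function `f` with neutral position `i`, each
frequency `(p^(t)_{i,j})_{t ∈ ℕ}` is a martingale with respect to its natural
filtration. -/
theorem neutral_frequency_is_martingale
    {Ω : Type*} [MeasurableSpace Ω] (Pr : Measure Ω) [IsProbabilityMeasure Pr]
    (n r lam mu : ℕ) (hn : 1 ≤ n) (hr : 2 ≤ r) (hmu : 1 ≤ mu) (hml : mu ≤ lam)
    (f : (Fin n → Fin r) → ℝ) (i : Fin n) (hneutral : Neutral n r f i)
    (A : RUMDAnm Ω Pr n r lam mu f) (j : Fin r)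
    (hmeas : ∀ t : ℕ, StronglyMeasurable (fun ω => A.freq t ω i j)) :
    Martingale (fun t ω => A.freq t ω i j)
      (Filtration.natural (fun t ω => A.freq t ω i j) hmeas) Pr :=
  neutral_frequency_is_martingale_general Pr n r lam mu hr hmu hml f i hneutral A j hmeas
end

section
/- Let λ, μ ∈ ℕ and s ≥ 1 a real number with λ ≥ 3seμ, let n ≥ 1, let p ∈ [0,1] with p ≥ b ≥ 2/n for some b > 0, and let X be a binomially distributed random variable X ~ Bin(λ, q) with success probability q ≥ p·(1 − 1/n)^{n−1}. Then E[X] ≥ 3sμp, and Pr[X ≤ (5/2)·s·μ·p] ≤ exp(−sμb/24). -/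
/-!
`X` has law `Bin(λ, q)` with `q ≥ p / e`, so `E[X] = λq ≥ 3sμp`. For the lower tail, Chernoff's
bound `Pr[X ≤ a] ≤ e^{δa} E[e^{-δX}]` with `E[e^{-δX}] ≤ exp(-λq(1 - e^{-δ}))` and
`e^{-δ} ≤ 1 - δ + δ²/2` gives `Pr[X ≤ (1 - δ)m] ≤ exp(-δ²m/2)` for every `m ≤ λq`; take
`δ = 1/6` and `m = 3sμp`, and use `p ≥ b`.
-/

open MeasureTheory ProbabilityTheory Real
open scoped unitInterval

theorem MeasureTheory.NullMeasurableSet.of_measure_add_measure_compl_le {α : Type*}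
    [MeasurableSpace α] {μ : Measure α} [IsFiniteMeasure μ] {s : Set α}
    (h : μ s + μ sᶜ ≤ μ Set.univ) : NullMeasurableSet s μ := by
  set B := toMeasurable μ s
  set C := toMeasurable μ sᶜ
  have hsB : s ⊆ B := subset_toMeasurable μ s
  have hsC : sᶜ ⊆ C := subset_toMeasurable μ sᶜ
  have hBC : B ∪ C = Set.univ := Set.eq_univ_of_forall fun x ↦ by
    by_cases hx : x ∈ s
    · exact Or.inl (hsB hx)
    · exact Or.inr (hsC hx)
  have hnull : μ (B ∩ C) = 0 := by
    have hsplit := measure_union_add_inter (μ := μ) B (measurableSet_toMeasurable μ sᶜ)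
    rw [hBC, measure_toMeasurable, measure_toMeasurable] at hsplit
    refine nonpos_iff_eq_zero.mp (ENNReal.le_of_add_le_add_left (measure_ne_top μ Set.univ) ?_)
    rwa [hsplit, add_zero]
  have hdiff : B \ s ⊆ B ∩ C := fun x hx ↦ ⟨hx.1, hsC hx.2⟩
  rw [← Set.sdiff_sdiff_cancel_left hsB]
  exact (measurableSet_toMeasurable μ s).nullMeasurableSet.diff
    (.of_null (measure_mono_null hdiff hnull))

theorem ProbabilityTheory.hasLaw_of_measure_preimage_singleton {Ω α : Type*}
    [MeasurableSpace Ω] [MeasurableSpace α] [Countable α] [MeasurableSingletonClass α]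
    {P : Measure Ω} [IsProbabilityMeasure P] {μ : Measure α} [IsProbabilityMeasure μ]
    {X : Ω → α} (h : ∀ a, P (X ⁻¹' {a}) = μ {a}) : HasLaw X μ P := by
  -- No measurability of `X` is assumed: the fibres already have total outer measure `1`, so
  -- each fibre and its complement add up to `P univ`, which forces null-measurability.
  have htotal : ∑' a, P (X ⁻¹' {a}) = 1 := by
    simpa [h] using μ.tsum_indicator_apply_singleton Set.univ MeasurableSet.univ
  have hfiber : ∀ a, NullMeasurableSet (X ⁻¹' {a}) P := by
    intro a
    refine .of_measure_add_measure_compl_le ?_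
    calc P (X ⁻¹' {a}) + P (X ⁻¹' {a})ᶜ
        = P (X ⁻¹' {a}) + P (⋃ b ∈ ({a}ᶜ : Set α), X ⁻¹' {b}) := by
          rw [Set.biUnion_preimage_singleton, Set.preimage_compl]
      _ ≤ P (X ⁻¹' {a}) + ∑' b : ({a}ᶜ : Set α), P (X ⁻¹' {(b : α)}) := by
          gcongr; exact measure_biUnion_le _ (Set.to_countable _) _
      _ = ∑' b, P (X ⁻¹' {b}) := by
          rw [← ENNReal.summable.tsum_add_tsum_compl (s := {a}) (f := fun b ↦ P (X ⁻¹' {b}))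
            ENNReal.summable, tsum_singleton (f := fun b ↦ P (X ⁻¹' {b}))]
      _ = P Set.univ := by rw [htotal, measure_univ]
  have hX : NullMeasurable X P := measurable_to_countable' hfiber
  refine ⟨hX.aemeasurable, Measure.ext_of_singleton fun a ↦ ?_⟩
  rw [Measure.map_apply_of_aemeasurable hX.aemeasurable (measurableSet_singleton a), h]

lemma Real.exp_neg_one_le_one_sub_inv_pow (n : ℕ) : exp (-1) ≤ (1 - (n : ℝ)⁻¹) ^ (n - 1) := by
  rcases n with _ | _ | m
  · simp
  · simp
  · have hbase : 1 - ((m + 2 : ℕ) : ℝ)⁻¹ = (1 + ((m + 1 : ℕ) : ℝ)⁻¹)⁻¹ := by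
      push_cast; field_simp; ring
    rw [hbase, Nat.add_sub_cancel, inv_pow, exp_neg]
    exact inv_anti₀ (by positivity) one_add_inv_pow_le_exp

lemma Real.exp_neg_le_one_sub_add_sq_div_two {x : ℝ} (hx : 0 ≤ x) :
    exp (-x) ≤ 1 - x + x ^ 2 / 2 := by
  rw [exp_neg]
  calc (exp x)⁻¹ ≤ (1 + x + x ^ 2 / 2)⁻¹ :=
        inv_anti₀ (by positivity) (quadratic_le_exp_of_nonneg hx)
    _ ≤ 1 - x + x ^ 2 / 2 := by
      rw [inv_le_iff_one_le_mul₀ (by positivity)]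
      nlinarith [sq_nonneg (x ^ 2)]

namespace ProbabilityTheory

variable {Ω : Type*} {m : MeasurableSpace Ω} {P : Measure Ω} {X : Ω → ℝ} {n : ℕ} {p : I}

lemma integrable_exp_mul_of_hasLaw_binomial (hX : HasLaw X Bin(ℝ, n, p) P) (t : ℝ) :
    Integrable (fun ω ↦ exp (t * X ω)) P :=
  (hX.map_eq ▸ integrable_map_cast_binomial (fun x ↦ exp (t * x))).comp_aemeasurable
    hX.aemeasurable

lemma mgf_of_hasLaw_binomial (hX : HasLaw X Bin(ℝ, n, p) P) :
    mgf X P = fun t ↦ ((p : ℝ) * exp t + (1 - p)) ^ n := by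
  ext t
  have hcomp := hX.integral_comp (f := fun x ↦ exp (t * x)) (by fun_prop)
  rw [mgf, ← Function.comp_def (fun x ↦ exp (t * x)) X, hcomp,
    integral_map_cast_binomial, add_pow, ← Nat.range_succ_eq_Iic]
  refine Finset.sum_congr rfl fun k _ ↦ ?_
  rw [smul_eq_mul, mul_pow, ← exp_nat_mul]
  ring_nf

lemma integral_of_hasLaw_binomial (hX : HasLaw X Bin(ℝ, n, p) P) : P[X] = (p : ℝ) * n := by
  have hint : integrableExpSet X P = Set.univ :=
    Set.eq_univ_of_forall (integrable_exp_mul_of_hasLaw_binomial hX)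
  have hderiv : HasDerivAt (fun t ↦ ((p : ℝ) * exp t + (1 - p)) ^ n) (p * n) 0 := by
    refine ((((hasDerivAt_exp 0).const_mul (p : ℝ)).add_const (1 - (p : ℝ))).fun_pow n)
      |>.congr_deriv ?_
    simp; ring
  rw [← deriv_mgf_zero (by simp [hint]), mgf_of_hasLaw_binomial hX, hderiv.deriv]

lemma measureReal_le_one_sub_mul_le_of_hasLaw_binomial (hX : HasLaw X Bin(ℝ, n, p) P)
    {μ δ : ℝ} (hμ : 0 ≤ μ) (hμn : μ ≤ p * n) (hδ : 0 ≤ δ) :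
    P.real {ω | X ω ≤ (1 - δ) * μ} ≤ exp (-(δ ^ 2 * μ / 2)) := by
  have := hX.isProbabilityMeasure
  have hmgf : mgf X P (-δ) ≤ exp (-(p * n * (1 - exp (-δ)))) := by
    have hbase : (p : ℝ) * exp (-δ) + (1 - p) ≤ exp (-(p * (1 - exp (-δ)))) := by
      linarith [add_one_le_exp (-(p * (1 - exp (-δ))))]
    calc mgf X P (-δ) = ((p : ℝ) * exp (-δ) + (1 - p)) ^ n := by rw [mgf_of_hasLaw_binomial hX]
      _ ≤ exp (-(p * (1 - exp (-δ)))) ^ n := by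
        gcongr
        exact add_nonneg (mul_nonneg (unitInterval.nonneg p) (exp_pos _).le)
          (sub_nonneg.mpr (unitInterval.le_one p))
      _ = exp (-(p * n * (1 - exp (-δ)))) := by rw [← exp_nat_mul]; ring_nf
  have hgap : δ - δ ^ 2 / 2 ≤ 1 - exp (-δ) := by
    linarith [exp_neg_le_one_sub_add_sq_div_two hδ]
  have hgap0 : 0 ≤ 1 - exp (-δ) := by linarith [exp_le_one_iff.mpr (neg_nonpos.mpr hδ)]
  calc P.real {ω | X ω ≤ (1 - δ) * μ}
      ≤ exp (-(-δ) * ((1 - δ) * μ)) * mgf X P (-δ) :=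
        measure_le_le_exp_mul_mgf _ (neg_nonpos.mpr hδ)
          (integrable_exp_mul_of_hasLaw_binomial hX _)
    _ ≤ exp (δ * ((1 - δ) * μ)) * exp (-(p * n * (1 - exp (-δ)))) := by
        rw [neg_neg]; gcongr
    _ ≤ exp (-(δ ^ 2 * μ / 2)) := by
        rw [← exp_add, exp_le_exp]
        nlinarith [mul_le_mul_of_nonneg_right hμn hgap0, mul_le_mul_of_nonneg_left hgap hμ]

end ProbabilityTheory

theorem binomial_critical_position_estimate_general
    {Ω : Type*} [MeasurableSpace Ω] (Pr : Measure Ω) [IsProbabilityMeasure Pr]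
    (lam mu n : ℕ)
    (s : ℝ) (hs : 1 ≤ s)
    (hlam : 3 * s * Real.exp 1 * (mu : ℝ) ≤ (lam : ℝ))
    (b p q : ℝ) (hbp : b ≤ p)
    (hp0 : 0 ≤ p) (hq0 : 0 ≤ q) (hq1 : q ≤ 1)
    (hq : p * (1 - ((n : ℝ))⁻¹) ^ (n - 1) ≤ q)
    (X : Ω → ℕ)
    (hX : ∀ m : ℕ, Pr {ω | X ω = m}
      = ENNReal.ofReal ((lam.choose m : ℝ) * q ^ m * (1 - q) ^ (lam - m))) :
    3 * s * (mu : ℝ) * p ≤ ∫ ω, (X ω : ℝ) ∂Pr ∧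
      Pr {ω | (X ω : ℝ) ≤ (5 / 2) * s * (mu : ℝ) * p}
        ≤ ENNReal.ofReal (Real.exp (-(s * (mu : ℝ) * b) / 24)) := by
  have hlaw : HasLaw (fun ω ↦ (X ω : ℝ)) Bin(ℝ, lam, ⟨q, hq0, hq1⟩) Pr :=
    HasLaw.comp ⟨by fun_prop, rfl⟩ <| hasLaw_of_measure_preimage_singleton fun m ↦ by
      rw [binomial_singleton]; exact hX m
  have hqp : p * exp (-1) ≤ q :=
    (mul_le_mul_of_nonneg_left (exp_neg_one_le_one_sub_inv_pow n) hp0).trans hq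
  have hs0 : 0 ≤ s := by linarith
  have hmean : 3 * s * mu * p ≤ q * lam :=
    calc 3 * s * mu * p = 3 * s * exp 1 * mu * (p * exp (-1)) := by
          rw [exp_neg]; field_simp
      _ ≤ lam * q := mul_le_mul hlam hqp (by positivity) (by positivity)
      _ = q * lam := mul_comm _ _
  refine ⟨(integral_of_hasLaw_binomial hlaw).symm ▸ hmean, ?_⟩
  have htail := measureReal_le_one_sub_mul_le_of_hasLaw_binomial hlaw (by positivity) hmean
    (by norm_num : (0 : ℝ) ≤ 1 / 6)
  rw [← ofReal_measureReal, show (5 / 2) * s * mu * p = (1 - 1 / 6) * (3 * s * mu * p) by ring]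
  refine ENNReal.ofReal_le_ofReal (htail.trans (exp_le_exp.mpr ?_))
  nlinarith [mul_le_mul_of_nonneg_left hbp (by positivity : 0 ≤ s * mu)]

/-- the core sampling estimate for a critical position.  Let
`λ ≥ 3seμ` with `s ≥ 1`, let `p ≥ b ≥ 2/n`, and let `X ~ Bin(λ, q)` with success
probability `q ≥ p (1 - 1/n)^{n-1}`.  Then `E[X] ≥ 3sμp` and
`Pr[X ≤ (5/2)sμp] ≤ exp(-sμb/24)`. -/
theorem binomial_critical_position_estimate
    {Ω : Type*} [MeasurableSpace Ω] (Pr : Measure Ω) [IsProbabilityMeasure Pr]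
    (lam mu n : ℕ) (hmu : 1 ≤ mu) (hn : 1 ≤ n)
    (s : ℝ) (hs : 1 ≤ s)
    (hlam : 3 * s * Real.exp 1 * (mu : ℝ) ≤ (lam : ℝ))
    (b p q : ℝ) (hb0 : 0 < b) (hbn : 2 / (n : ℝ) ≤ b) (hbp : b ≤ p)
    (hp0 : 0 ≤ p) (hp1 : p ≤ 1) (hq0 : 0 ≤ q) (hq1 : q ≤ 1)
    (hq : p * (1 - ((n : ℝ))⁻¹) ^ (n - 1) ≤ q)
    (X : Ω → ℕ)
    (hX : ∀ m : ℕ, Pr {ω | X ω = m}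
      = ENNReal.ofReal ((lam.choose m : ℝ) * q ^ m * (1 - q) ^ (lam - m))) :
    3 * s * (mu : ℝ) * p ≤ ∫ ω, (X ω : ℝ) ∂Pr ∧
      Pr {ω | (X ω : ℝ) ≤ (5 / 2) * s * (mu : ℝ) * p}
        ≤ ENNReal.ofReal (Real.exp (-(s * (mu : ℝ) * b) / 24)) :=
  binomial_critical_position_estimate_general Pr lam mu n s hs hlam b p q hbp hp0 hq0 hq1 hq X hX
end
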